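/- Consider the bivariate Elastic net with M = [[1,ρ],[ρ,1]], h₁ > |h₂| ≥ 0, ρ ∈ [0,1), μ ≥ 0, η = ρ/(1+μ). If h₂ ≥ η·h₁ and √q < (h₂ − η·h₁)/(1−η), then both coordinates of the minimizer are nonzero: b̂₁ = [(h₁−√q)/(1+μ) − η·(h₂−√q)/(1+μ)]/(1−η²) and b̂₂ = [(h₂−√q)/(1+μ) − η·(h₁−√q)/(1+μ)]/(1−η²), with b̂₁ > 0 and b̂₂ > 0. -/

import Mathlib

/-- Bivariate Elastic-net objective. -/
noncomputable def enObj (ρ μ q h1 h2 b1 b2 : ℝ) : ℝ :=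
  (1 / 2) * (b1 ^ 2 + 2 * ρ * b1 * b2 + b2 ^ 2) - (b1 * h1 + b2 * h2)
    + Real.sqrt q * (|b1| + |b2|) + (μ / 2) * (b1 ^ 2 + b2 ^ 2)

lemma quadForm_nonneg {ρ t : ℝ} (hρt : |ρ| ≤ t) (x y : ℝ) :
    0 ≤ t * x ^ 2 + 2 * ρ * x * y + t * y ^ 2 := by
  have hxy : -(2 * ρ * x * y) ≤ t * (x ^ 2 + y ^ 2) := calc
    -(2 * ρ * x * y) ≤ |ρ| * (2 * |x| * |y|) := by
      have h := neg_abs_le (ρ * x * y)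
      rw [abs_mul, abs_mul] at h
      linarith
    _ ≤ t * (x ^ 2 + y ^ 2) := by
      rw [← sq_abs x, ← sq_abs y]
      exact mul_le_mul hρt (by nlinarith [sq_nonneg (|x| - |y|)]) (by positivity)
        ((abs_nonneg ρ).trans hρt)
  linarith

/-- On the positive quadrant the subgradient conditions are these linear equations; given them,
the objective minus its value at `b` is a positive semidefinite quadratic in `c - b` plus the
nonnegative terms `√q (|cᵢ| - cᵢ)`. -/
theorem enObj_le_of_stationary {ρ μ q h1 h2 b1 b2 : ℝ} (hρμ : |ρ| ≤ 1 + μ)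
    (hb1 : 0 ≤ b1) (hb2 : 0 ≤ b2)
    (e1 : (1 + μ) * b1 + ρ * b2 = h1 - Real.sqrt q)
    (e2 : ρ * b1 + (1 + μ) * b2 = h2 - Real.sqrt q) (c1 c2 : ℝ) :
    enObj ρ μ q h1 h2 b1 b2 ≤ enObj ρ μ q h1 h2 c1 c2 := by
  set s := Real.sqrt q
  have hdiff : enObj ρ μ q h1 h2 c1 c2 - enObj ρ μ q h1 h2 b1 b2
      = (1 / 2) * ((1 + μ) * (c1 - b1) ^ 2 + 2 * ρ * (c1 - b1) * (c2 - b2)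
          + (1 + μ) * (c2 - b2) ^ 2) + s * (|c1| - c1) + s * (|c2| - c2) := by
    unfold enObj
    rw [abs_of_nonneg hb1, abs_of_nonneg hb2]
    linear_combination (c1 - b1) * e1 + (c2 - b2) * e2
  have hquad := quadForm_nonneg hρμ (c1 - b1) (c2 - b2)
  have hs : 0 ≤ s := Real.sqrt_nonneg q
  nlinarith [le_abs_self c1, le_abs_self c2]

/-- Cramer's rule for `[[t, ρ], [ρ, t]] b = r`, written with `η = ρ / t`. -/
lemma cramer_eq {t ρ r1 r2 : ℝ} (ht : t ≠ 0) (hη : 1 - (ρ / t) ^ 2 ≠ 0) :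
    t * ((r1 / t - ρ / t * (r2 / t)) / (1 - (ρ / t) ^ 2))
      + ρ * ((r2 / t - ρ / t * (r1 / t)) / (1 - (ρ / t) ^ 2)) = r1 := by
  have hdet : t ^ 2 - ρ ^ 2 ≠ 0 := by
    rwa [div_pow, one_sub_div (pow_ne_zero 2 ht), div_ne_zero_iff, and_iff_left] at hη
    exact pow_ne_zero 2 ht
  field_simp
  ring

lemma cramer_pos {t η r1 r2 : ℝ} (ht : 0 < t) (hη : η ^ 2 < 1) (hr : η * r2 < r1) :
    0 < (r1 / t - η * (r2 / t)) / (1 - η ^ 2) := by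
  have hnum : r1 / t - η * (r2 / t) = (r1 - η * r2) / t := by ring
  rw [hnum]
  exact div_pos (div_pos (by linarith) ht) (by linarith)

theorem stmt_7_general (ρ μ q h1 h2 : ℝ) (hρ : ρ ∈ Set.Ico (0 : ℝ) 1) (hμ : 0 ≤ μ)
    (hh : |h2| < h1)
    (hq : Real.sqrt q < (h2 - (ρ / (1 + μ)) * h1) / (1 - ρ / (1 + μ))) :
    let η := ρ / (1 + μ)
    let b1 := ((h1 - Real.sqrt q) / (1 + μ) - η * ((h2 - Real.sqrt q) / (1 + μ))) / (1 - η ^ 2)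
    let b2 := ((h2 - Real.sqrt q) / (1 + μ) - η * ((h1 - Real.sqrt q) / (1 + μ))) / (1 - η ^ 2)
    0 < b1 ∧ 0 < b2 ∧
    ∀ c1 c2 : ℝ, enObj ρ μ q h1 h2 b1 b2 ≤ enObj ρ μ q h1 h2 c1 c2 := by
  obtain ⟨hρ0, hρ1⟩ := hρ
  intro η b1 b2
  have ht : 0 < 1 + μ := by linarith
  have hη0 : 0 ≤ η := div_nonneg hρ0 ht.le
  have hη1 : η < 1 := (div_lt_one ht).mpr (by linarith)
  have hη2 : η ^ 2 < 1 := by nlinarith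
  have hq' : Real.sqrt q * (1 - η) < h2 - η * h1 := (lt_div_iff₀ (by linarith)).mp hq
  have hh' : h2 < h1 := (le_abs_self h2).trans_lt hh
  -- the numerator of `b1` exceeds that of `b2` by `(1 + η) (h1 - h2)`
  have hb1 : 0 < b1 := cramer_pos ht hη2 (by nlinarith)
  have hb2 : 0 < b2 := cramer_pos ht hη2 (by nlinarith)
  have hdet : 1 - η ^ 2 ≠ 0 := by linarith
  refine ⟨hb1, hb2, enObj_le_of_stationary ?_ hb1.le hb2.le (cramer_eq ht.ne' hdet) ?_⟩
  · rw [abs_of_nonneg hρ0]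
    linarith
  · rw [add_comm]
    exact cramer_eq ht.ne' hdet

/-- Final segment of the Elastic-net solution path: with `η = ρ/(1+μ)`, if
`h₂ ≥ η h₁` and `√q < (h₂−ηh₁)/(1−η)`, both coordinates of the minimizer are
positive and are given by the explicit formulas. -/
theorem stmt_7 (ρ μ q h1 h2 : ℝ) (hρ : ρ ∈ Set.Ico (0 : ℝ) 1) (hμ : 0 ≤ μ)
    (hh : |h2| < h1)
    (hη : h2 ≥ (ρ / (1 + μ)) * h1)
    (hq : Real.sqrt q < (h2 - (ρ / (1 + μ)) * h1) / (1 - ρ / (1 + μ))) :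
    let η := ρ / (1 + μ)
    let b1 := ((h1 - Real.sqrt q) / (1 + μ) - η * ((h2 - Real.sqrt q) / (1 + μ))) / (1 - η ^ 2)
    let b2 := ((h2 - Real.sqrt q) / (1 + μ) - η * ((h1 - Real.sqrt q) / (1 + μ))) / (1 - η ^ 2)
    0 < b1 ∧ 0 < b2 ∧
    ∀ c1 c2 : ℝ, enObj ρ μ q h1 h2 b1 b2 ≤ enObj ρ μ q h1 h2 c1 c2 :=
  stmt_7_general ρ μ q h1 h2 hρ hμ hh hq
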